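/- arXiv:2508.17552 — 9 statements merged into one kernel-verified Lean document; each statement's English description precedes it below -/
import Mathlib

section
/- Let E be a semilattice with zero and let e ∈ E be nonzero. Then there exists a tight character φ on E such that φ(e) = 1. -/
/-- A finite subset `C` is a cover for `f`: every `c ∈ C` satisfies `c ≤ f` and every
nonzero `g ≤ f` meets some `c ∈ C`. -/
def IsCover {E : Type*} [SemilatticeInf E] [OrderBot E] (C : Finset E) (f : E) : Prop :=
  (∀ c ∈ C, c ≤ f) ∧ ∀ g : E, g ≠ ⊥ → g ≤ f → ∃ c ∈ C, g ⊓ c ≠ ⊥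

/-- The (finite) family `{v i : i ∈ C}` is a cover for `f`. -/
def IsCoverFam {ι : Type*} {E : Type*} [SemilatticeInf E] [OrderBot E]
    (C : Finset ι) (v : ι → E) (f : E) : Prop :=
  (∀ i ∈ C, v i ≤ f) ∧ ∀ g : E, g ≠ ⊥ → g ≤ f → ∃ i ∈ C, g ⊓ v i ≠ ⊥

/-- A character on a semilattice with zero: a multiplicative `{0,1}`-valued map sending
`0` to `0` and not identically zero. -/
def IsChar {E : Type*} [SemilatticeInf E] [OrderBot E] (φ : E → Bool) : Prop :=
  φ ⊥ = false ∧ (∀ e f : E, φ (e ⊓ f) = (φ e && φ f)) ∧ ∃ e : E, φ e = true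

/-- A tight character: a character such that, for every `f` and every cover `C` for `f`,
`φ f = max_{c ∈ C} φ c`. -/
def IsTightChar {E : Type*} [SemilatticeInf E] [OrderBot E] (φ : E → Bool) : Prop :=
  IsChar φ ∧ ∀ f : E, ∀ C : Finset E, IsCover C f → (φ f = true ↔ ∃ c ∈ C, φ c = true)

/-- A filter on a semilattice with zero. -/
def IsFilterOn {E : Type*} [SemilatticeInf E] [OrderBot E] (ξ : Set E) : Prop :=
  ξ.Nonempty ∧ ⊥ ∉ ξ ∧ (∀ e ∈ ξ, ∀ f ∈ ξ, e ⊓ f ∈ ξ) ∧ ∀ e ∈ ξ, ∀ f : E, e ≤ f → f ∈ ξ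

/-- A tight filter: whenever `C` is a cover for some `f ∈ ξ`, some element of `C` lies in `ξ`. -/
def IsTightFilter {E : Type*} [SemilatticeInf E] [OrderBot E] (ξ : Set E) : Prop :=
  IsFilterOn ξ ∧ ∀ f ∈ ξ, ∀ C : Finset E, IsCover C f → ∃ c ∈ C, c ∈ ξ

/-- The tight order: `e` is tightly below `f` iff there is no nonzero `g ≤ e` with `g ⊓ f = ⊥`. -/
def TightBelow {E : Type*} [SemilatticeInf E] [OrderBot E] (e f : E) : Prop :=
  ¬ ∃ g : E, g ≠ ⊥ ∧ g ≤ e ∧ g ⊓ f = ⊥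

/-- Tight equivalence. -/
def TightEquiv {E : Type*} [SemilatticeInf E] [OrderBot E] (e f : E) : Prop :=
  TightBelow e f ∧ TightBelow f e

/-- A homomorphism is tightly injective if it reflects tight equivalence. -/
def TightlyInjective {E F : Type*} [SemilatticeInf E] [OrderBot E] [SemilatticeInf F] [OrderBot F]
    (h : E → F) : Prop :=
  ∀ e₁ e₂ : E, TightEquiv (h e₁) (h e₂) → TightEquiv e₁ e₂

/-- A homomorphism is tightly surjective if its range is a large subset of the codomain:
for every `f` there is a finite `C ⊆ E` with `h e ≼ f` for all `e ∈ C` and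
`{f ⊓ h e : e ∈ C}` a cover for `f`. -/
def TightlySurjective {E F : Type*} [SemilatticeInf E] [OrderBot E] [SemilatticeInf F] [OrderBot F]
    (h : E → F) : Prop :=
  ∀ f : F, ∃ C : Finset E, (∀ e ∈ C, TightBelow (h e) f) ∧ IsCoverFam C (fun e => f ⊓ h e) f

/-- A homomorphism of semilattices with zero is tight if it satisfies conditions
(4.1.ii) and (4.3.ii) of the paper. -/
def IsTightHom {E F : Type*} [SemilatticeInf E] [OrderBot E] [SemilatticeInf F] [OrderBot F]
    (h : E → F) : Prop :=
  (∀ f : F, ∃ C : Finset E, IsCoverFam C (fun e => f ⊓ h e) f) ∧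
  (∀ e : E, ∀ C : Finset E, IsCover C e → IsCoverFam C h (h e))

/-! A maximal filter containing `e` exists by Zorn's lemma. Maximality makes it an ultrafilter:
every `c` outside it is disjoint from one of its members, since otherwise `c` together with
the filter would generate a larger filter. Given a cover `C` of a member `f`, choosing such
disjoint members for every `c ∈ C` and meeting them with `f` produces a nonzero element below `f`
that misses all of `C`, which is impossible; so ultrafilters are tight, and membership in a tight
filter is a tight character. -/

section TightFilter

variable {E : Type*} [SemilatticeInf E] [OrderBot E] {ξ : Set E}

theorem isFilterOn_Ici {e : E} (he : e ≠ ⊥) : IsFilterOn (Set.Ici e) :=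
  ⟨⟨e, le_rfl⟩, fun h => he (le_bot_iff.mp h), fun _ ha _ hb => le_inf ha hb,
    fun _ ha _ hf => ha.trans hf⟩

theorem isFilterOn_sUnion {c : Set (Set E)} (hc : ∀ ξ ∈ c, IsFilterOn ξ)
    (hchain : IsChain (· ⊆ ·) c) (hne : c.Nonempty) : IsFilterOn (⋃₀ c) := by
  obtain ⟨ξ₀, hξ₀⟩ := hne
  obtain ⟨e, he⟩ := (hc ξ₀ hξ₀).1
  refine ⟨⟨e, ξ₀, hξ₀, he⟩, ?_, ?_, ?_⟩
  · rintro ⟨ξ, hξ, hbot⟩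
    exact (hc ξ hξ).2.1 hbot
  · rintro a ⟨ξ, hξ, ha⟩ b ⟨η, hη, hb⟩
    rcases hchain.total hξ hη with h | h
    · exact ⟨η, hη, (hc η hη).2.2.1 a (h ha) b hb⟩
    · exact ⟨ξ, hξ, (hc ξ hξ).2.2.1 a ha b (h hb)⟩
  · rintro a ⟨ξ, hξ, ha⟩ f hf
    exact ⟨ξ, hξ, (hc ξ hξ).2.2.2 a ha f hf⟩

theorem exists_maximal_isFilterOn_mem {e : E} (he : e ≠ ⊥) :
    ∃ ξ, Maximal IsFilterOn ξ ∧ e ∈ ξ := by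
  obtain ⟨ξ, hIci, hξ⟩ := zorn_subset_nonempty {ξ : Set E | IsFilterOn ξ}
    (fun c hc hchain hne => ⟨⋃₀ c, isFilterOn_sUnion hc hchain hne,
      fun _ => Set.subset_sUnion_of_mem⟩) _ (isFilterOn_Ici he)
  exact ⟨ξ, hξ, hIci le_rfl⟩

theorem IsFilterOn.isFilterOn_inf_le {c : E} (hξ : IsFilterOn ξ) (hc : ∀ f ∈ ξ, c ⊓ f ≠ ⊥) :
    IsFilterOn {g | ∃ f ∈ ξ, c ⊓ f ≤ g} := by
  obtain ⟨⟨e, he⟩, -, hmeet, -⟩ := hξ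
  refine ⟨⟨c ⊓ e, e, he, le_rfl⟩, ?_, ?_, ?_⟩
  · rintro ⟨f, hf, hle⟩
    exact hc f hf (le_bot_iff.mp hle)
  · rintro a ⟨f₁, hf₁, h₁⟩ b ⟨f₂, hf₂, h₂⟩
    exact ⟨f₁ ⊓ f₂, hmeet _ hf₁ _ hf₂, le_inf ((inf_le_inf_left c inf_le_left).trans h₁)
      ((inf_le_inf_left c inf_le_right).trans h₂)⟩
  · rintro a ⟨f, hf, h⟩ g hg
    exact ⟨f, hf, h.trans hg⟩

theorem Maximal.exists_inf_eq_bot_of_notMem {c : E} (hξ : Maximal IsFilterOn ξ) (hc : c ∉ ξ) :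
    ∃ f ∈ ξ, c ⊓ f = ⊥ := by
  by_contra! hdisj
  have hsub : ξ ⊆ {g | ∃ f ∈ ξ, c ⊓ f ≤ g} := fun f hf => ⟨f, hf, inf_le_right⟩
  obtain ⟨e, he⟩ := hξ.prop.1
  exact hc ((hξ.eq_of_subset (hξ.prop.isFilterOn_inf_le hdisj) hsub).symm ▸ ⟨e, he, inf_le_left⟩)

theorem Maximal.exists_forall_inf_eq_bot_of_disjoint (hξ : Maximal IsFilterOn ξ) (C : Finset E)
    (hC : ∀ c ∈ C, c ∉ ξ) : ∃ g ∈ ξ, ∀ c ∈ C, c ⊓ g = ⊥ := by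
  classical
  induction C using Finset.induction_on with
  | empty => exact hξ.prop.1.imp fun g hg => ⟨hg, by simp⟩
  | insert a C _ ih =>
    obtain ⟨g, hg, hgC⟩ := ih fun c hc => hC c (Finset.mem_insert_of_mem hc)
    obtain ⟨f, hf, haf⟩ := hξ.exists_inf_eq_bot_of_notMem (hC a (Finset.mem_insert_self a C))
    refine ⟨g ⊓ f, hξ.prop.2.2.1 g hg f hf, ?_⟩
    intro c hc
    rcases Finset.mem_insert.mp hc with rfl | hc
    · exact le_bot_iff.mp (haf ▸ inf_le_inf_left c inf_le_right)
    · exact le_bot_iff.mp (hgC c hc ▸ inf_le_inf_left c inf_le_left)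

theorem Maximal.isTightFilter (hξ : Maximal IsFilterOn ξ) : IsTightFilter ξ := by
  refine ⟨hξ.prop, fun f hf C hC => ?_⟩
  by_contra! hCξ
  obtain ⟨g, hg, hgC⟩ := hξ.exists_forall_inf_eq_bot_of_disjoint C hCξ
  have hgf : g ⊓ f ∈ ξ := hξ.prop.2.2.1 g hg f hf
  obtain ⟨c, hc, hne⟩ := hC.2 (g ⊓ f) (fun h => hξ.prop.2.1 (h ▸ hgf)) inf_le_right
  refine hne (le_bot_iff.mp ?_)
  calc g ⊓ f ⊓ c ≤ c ⊓ g := by rw [inf_comm]; exact inf_le_inf_left c inf_le_left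
    _ = ⊥ := hgC c hc

theorem IsTightFilter.isTightChar [DecidablePred (· ∈ ξ)] (hξ : IsTightFilter ξ) :
    IsTightChar fun f => decide (f ∈ ξ) := by
  obtain ⟨⟨⟨e, he⟩, hbot, hmeet, hup⟩, htight⟩ := hξ
  have hmem_inf : ∀ a b, a ⊓ b ∈ ξ ↔ a ∈ ξ ∧ b ∈ ξ := fun a b =>
    ⟨fun h => ⟨hup _ h a inf_le_left, hup _ h b inf_le_right⟩, fun h => hmeet a h.1 b h.2⟩
  refine ⟨⟨by simpa using hbot, fun a b => by simp [hmem_inf], e, by simpa using he⟩,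
    fun f C hC => ?_⟩
  simp only [decide_eq_true_eq]
  exact ⟨fun hf => htight f hf C hC, fun ⟨c, hc, hcξ⟩ => hup c hcξ f (hC.1 c hc)⟩

end TightFilter

/-- In a semilattice with zero, for every nonzero `e` there exists a tight
character `φ` with `φ e = 1`. -/
theorem exists_tight_char_of_ne_bot {E : Type*} [SemilatticeInf E] [OrderBot E]
    (e : E) (he : e ≠ ⊥) :
    ∃ φ : E → Bool, IsTightChar φ ∧ φ e = true := by
  classical
  obtain ⟨ξ, hξ, heξ⟩ := exists_maximal_isFilterOn_mem he
  exact ⟨fun f => decide (f ∈ ξ), hξ.isTightFilter.isTightChar, decide_eq_true heξ⟩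
end

section
/- Let E be a semilattice with zero and let ψ be an ultra-character on E (a character whose support is a maximal filter). Then the collection of sets D_e = {φ ∈ Ê_tight : φ(e) = 1}, where e ranges over the support of ψ, forms a neighborhood basis for ψ in the tight spectrum Ê_tight. -/
/-!
The support of an ultra-character `ψ` decides every `f ∈ E` locally: if `ψ f = 1` then `f` itself
lies in the support, and if `ψ f = 0` then maximality of the support yields some `c` in it with
`c ∧ f = 0`, so any character `χ` with `χ c = 1` has `χ f = 0`. Since the support is closed under
meets, finitely many such witnesses combine into one `e` with `ψ e = 1` such that every character
with `χ e = 1` agrees with `ψ` on a prescribed finite set, i.e. `D_e` lies in the corresponding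
basic neighbourhood of the product topology.
-/

open Filter Topology

section DiscretePi

variable {ι : Type*} {α : ι → Type*} [∀ i, TopologicalSpace (α i)] [∀ i, DiscreteTopology (α i)]

theorem hasBasis_nhds_subtype_pi_discrete {p : (∀ i, α i) → Prop} (x : Subtype p) :
    (𝓝 x).HasBasis Set.Finite fun I => {y : Subtype p | ∀ i ∈ I, y.1 i = x.1 i} := by
  rw [nhds_induced, nhds_pi]
  simp only [nhds_discrete]
  exact (hasBasis_pi_pure _).comap _

end DiscretePi

namespace IsChar

variable {E : Type*} [SemilatticeInf E] [OrderBot E] {φ : E → Bool}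

theorem map_inf_of_map_eq_true (hφ : IsChar φ) {a b : E} (ha : φ a = true) (hb : φ b = true) :
    φ (a ⊓ b) = true := by
  rw [hφ.2.1, ha, hb, Bool.and_self]

theorem map_eq_true_of_le (hφ : IsChar φ) {a b : E} (hab : a ≤ b) (ha : φ a = true) :
    φ b = true := by
  have h := hφ.2.1 a b
  rwa [inf_eq_left.2 hab, ha, Bool.true_and, eq_comm] at h

theorem map_eq_false_of_inf_eq_bot (hφ : IsChar φ) {a b : E} (hab : a ⊓ b = ⊥)
    (ha : φ a = true) : φ b = false := by
  have h := hφ.2.1 a b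
  rwa [hab, hφ.1, ha, Bool.true_and, eq_comm] at h

theorem exists_inf_eq_bot_of_map_eq_false (hφ : IsChar φ)
    (hmax : ∀ ξ : Set E, IsFilterOn ξ → {e : E | φ e = true} ⊆ ξ → ξ = {e : E | φ e = true})
    {f : E} (hf : φ f = false) : ∃ c, φ c = true ∧ c ⊓ f = ⊥ := by
  by_contra! hmeet
  obtain ⟨e₀, he₀⟩ := hφ.2.2
  let ξ : Set E := {g | ∃ e, φ e = true ∧ e ⊓ f ≤ g}
  have hsupp : {e : E | φ e = true} ⊆ ξ := fun e he => ⟨e, he, inf_le_left⟩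
  have hξ : IsFilterOn ξ := by
    refine ⟨⟨e₀, hsupp he₀⟩, fun ⟨e, he, hle⟩ => hmeet e he (le_bot_iff.1 hle), ?_, ?_⟩
    · rintro g₁ ⟨e₁, he₁, h₁⟩ g₂ ⟨e₂, he₂, h₂⟩
      exact ⟨e₁ ⊓ e₂, hφ.map_inf_of_map_eq_true he₁ he₂,
        le_inf ((inf_le_inf_right f inf_le_left).trans h₁)
          ((inf_le_inf_right f inf_le_right).trans h₂)⟩
    · rintro g ⟨e, he, hle⟩ g' hgg'
      exact ⟨e, he, hle.trans hgg'⟩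
  have hfξ : f ∈ ξ := ⟨e₀, he₀, inf_le_right⟩
  rw [hmax ξ hξ hsupp, Set.mem_ofPred_eq, hf] at hfξ
  exact Bool.false_ne_true hfξ

theorem exists_forall_of_antitone (hφ : IsChar φ) {ι : Type*} {P : ι → E → Prop}
    (hP : ∀ i, Antitone (P i)) (h : ∀ i, ∃ e, φ e = true ∧ P i e) {I : Set ι} (hI : I.Finite) :
    ∃ e, φ e = true ∧ ∀ i ∈ I, P i e := by
  induction I, hI using Set.Finite.induction_on with
  | empty => simpa using hφ.2.2
  | @insert i I _ _ ih =>
    obtain ⟨e, he, hPe⟩ := ih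
    obtain ⟨c, hc, hPc⟩ := h i
    refine ⟨c ⊓ e, hφ.map_inf_of_map_eq_true hc he, ?_⟩
    rintro j (rfl | hj)
    · exact hP j inf_le_left hPc
    · exact hP j inf_le_right (hPe j hj)

theorem exists_forall_map_eq (hφ : IsChar φ)
    (hmax : ∀ ξ : Set E, IsFilterOn ξ → {e : E | φ e = true} ⊆ ξ → ξ = {e : E | φ e = true})
    {I : Set E} (hI : I.Finite) :
    ∃ e, φ e = true ∧ ∀ f ∈ I, ∀ χ : E → Bool, IsChar χ → χ e = true → χ f = φ f := by
  refine hφ.exists_forall_of_antitone (fun f a b hab hb χ hχ ha => hb χ hχ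
    (hχ.map_eq_true_of_le hab ha)) (fun f => ?_) hI
  cases hf : φ f with
  | true => exact ⟨f, hf, fun χ _ hχf => hχf⟩
  | false =>
    obtain ⟨c, hc, hcf⟩ := hφ.exists_inf_eq_bot_of_map_eq_false hmax hf
    exact ⟨c, hc, fun χ hχ hχc => hχ.map_eq_false_of_inf_eq_bot hcf hχc⟩

end IsChar

/-- If `ψ` is an ultra-character (a tight character whose support is a
maximal filter), then the sets `D_e = {φ ∈ Ê_tight : φ e = 1}`, with `e` ranging over the
support of `ψ`, form a neighborhood basis for `ψ` in the tight spectrum. -/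
theorem ultraChar_nhds_hasBasis {E : Type*} [SemilatticeInf E] [OrderBot E]
    (ψ : {φ : E → Bool // IsTightChar φ})
    (hmax : ∀ ξ : Set E, IsFilterOn ξ → {e : E | ψ.1 e = true} ⊆ ξ →
      ξ = {e : E | ψ.1 e = true}) :
    (nhds ψ).HasBasis (fun e : E => ψ.1 e = true)
      (fun e : E => {χ : {φ : E → Bool // IsTightChar φ} | χ.1 e = true}) := by
  refine (hasBasis_nhds_subtype_pi_discrete ψ).to_hasBasis (fun I hI => ?_)
    (fun e he => ⟨{e}, Set.finite_singleton e, fun χ hχ => ?_⟩)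
  · obtain ⟨e, he, hagree⟩ := ψ.2.1.exists_forall_map_eq hmax hI
    exact ⟨e, he, fun χ hχ f hf => hagree f hf χ.1 χ.2.1 hχ⟩
  · rw [Set.mem_ofPred_eq, hχ e rfl, he]
end

section
/- Let E be a semilattice with zero and let e, f ∈ E. The following are equivalent: (i) e ≼ f (e is tightly below f); (ii) for every tight character φ on E one has φ(e) ≤ φ(f); (iii) for every tight filter ξ on E, e ∈ ξ implies f ∈ ξ; (iv) for every g ∈ E, g ∧ f = 0 implies g ∧ e = 0; (v) every nonzero g ∈ E with g ≤ e satisfies g ∧ f ≠ 0. -/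
open Classical in
/-- Every nonzero element lies in a tight (indeed maximal) filter. -/
lemma exists_tight_filter {E : Type*} [SemilatticeInf E] [OrderBot E] {g : E} (hg : g ≠ ⊥) :
    ∃ ξ : Set E, IsTightFilter ξ ∧ g ∈ ξ := by
  set S : Set (Set E) := {ξ | IsFilterOn ξ ∧ g ∈ ξ} with hS
  have hP : {x : E | g ≤ x} ∈ S := by
    refine ⟨⟨⟨g, le_refl g⟩, ?_, ?_, ?_⟩, le_refl g⟩
    · intro h; exact hg (le_bot_iff.mp h)
    · intro a ha b hb; exact le_inf ha hb
    · intro a ha b hab; exact le_trans ha hab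
  obtain ⟨m, hPm, hmS, hmax⟩ := zorn_subset_nonempty S (fun c hcS hchain hcne => by
    refine ⟨⋃₀ c, ⟨⟨?_, ?_, ?_, ?_⟩, ?_⟩, fun s hs => Set.subset_sUnion_of_mem hs⟩
    · obtain ⟨t, ht⟩ := hcne
      exact ⟨g, Set.mem_sUnion.mpr ⟨t, ht, (hcS ht).2⟩⟩
    · rintro ⟨t, ht, hbt⟩; exact (hcS ht).1.2.1 hbt
    · rintro a ⟨t, ht, hat⟩ b ⟨u, hu, hbu⟩
      rcases hchain.total ht hu with h | h
      · exact ⟨u, hu, (hcS hu).1.2.2.1 a (h hat) b hbu⟩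
      · exact ⟨t, ht, (hcS ht).1.2.2.1 a hat b (h hbu)⟩
    · rintro a ⟨t, ht, hat⟩ b hab
      exact ⟨t, ht, (hcS ht).1.2.2.2 a hat b hab⟩
    · obtain ⟨t, ht⟩ := hcne
      exact ⟨t, ht, (hcS ht).2⟩) _ hP
  obtain ⟨hmF, hgm⟩ := hmS
  -- maximality criterion: anything meeting every element of m is in m
  have hmeet : ∀ x : E, (∀ y ∈ m, x ⊓ y ≠ ⊥) → x ∈ m := by
    intro x hx
    set m' : Set E := {z | ∃ y ∈ m, x ⊓ y ≤ z} with hm'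
    have hm'S : m' ∈ S := by
      refine ⟨⟨⟨x, g, hgm, inf_le_left⟩, ?_, ?_, ?_⟩, g, hgm, le_trans inf_le_right (le_refl g)⟩
      · rintro ⟨y, hy, hxy⟩
        exact hx y hy (le_bot_iff.mp hxy)
      · rintro a ⟨y1, hy1, h1⟩ b ⟨y2, hy2, h2⟩
        exact ⟨y1 ⊓ y2, hmF.2.2.1 y1 hy1 y2 hy2,
          le_inf (le_trans (inf_le_inf_left x inf_le_left) h1)
                 (le_trans (inf_le_inf_left x inf_le_right) h2)⟩
      · rintro a ⟨y, hy, hxy⟩ b hab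
        exact ⟨y, hy, le_trans hxy hab⟩
    have hmm' : m ⊆ m' := fun z hz => ⟨z, hz, inf_le_right⟩
    have := hmax hm'S hmm'
    exact this ⟨g, hgm, inf_le_left⟩
  refine ⟨m, ⟨hmF, ?_⟩, hgm⟩
  intro f hf C hC
  by_contra hno
  push_neg at hno
  have hfne : f ≠ ⊥ := fun h => hmF.2.1 (h ▸ hf)
  have hCne : C.Nonempty := by
    obtain ⟨c, hc, -⟩ := hC.2 f hfne le_rfl
    exact ⟨c, hc⟩
  have hy : ∀ c ∈ C, ∃ y ∈ m, c ⊓ y = ⊥ := by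
    intro c hc
    by_contra h
    push_neg at h
    exact hno c hc (hmeet c h)
  choose yfun hyfun using fun c (hc : c ∈ C) => hy c hc
  set yf : E → E := fun c => if hc : c ∈ C then yfun c hc else g with hyf
  have hyfm : ∀ c ∈ C, yf c ∈ m := by
    intro c hc; simp only [hyf, dif_pos hc]; exact (hyfun c hc).1
  have hyfb : ∀ c ∈ C, c ⊓ yf c = ⊥ := by
    intro c hc; simp only [hyf, dif_pos hc]; exact (hyfun c hc).2
  have hY : C.inf' hCne yf ∈ m :=
    Finset.inf'_mem m (fun a ha b hb => hmF.2.2.1 a ha b hb) C hCne yf hyfm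
  have hz : f ⊓ C.inf' hCne yf ∈ m := hmF.2.2.1 f hf _ hY
  have hzne : f ⊓ C.inf' hCne yf ≠ ⊥ := fun h => hmF.2.1 (h ▸ hz)
  obtain ⟨c, hc, hcm⟩ := hC.2 _ hzne inf_le_left
  apply hcm
  have h1 : f ⊓ C.inf' hCne yf ⊓ c ≤ yf c ⊓ c :=
    inf_le_inf_right c (le_trans inf_le_right (Finset.inf'_le yf hc))
  rw [inf_comm (yf c) c] at h1
  exact le_bot_iff.mp ((hyfb c hc) ▸ h1)

/-- Characterizations of the tight order `e ≼ f` on a semilattice with zero. -/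
theorem tightBelow_tfae {E : Type*} [SemilatticeInf E] [OrderBot E] (e f : E) :
    List.TFAE
      [TightBelow e f,
       ∀ φ : E → Bool, IsTightChar φ → φ e ≤ φ f,
       ∀ ξ : Set E, IsTightFilter ξ → e ∈ ξ → f ∈ ξ,
       ∀ g : E, g ⊓ f = ⊥ → g ⊓ e = ⊥,
       ∀ g : E, g ≠ ⊥ → g ≤ e → g ⊓ f ≠ ⊥] := by
  classical
  tfae_have 1 → 5
  · intro h g hgne hge hgf
    exact h ⟨g, hgne, hge, hgf⟩
  tfae_have 5 → 4
  · intro h g hgf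
    by_contra hge
    exact h (g ⊓ e) hge inf_le_right (by
      rw [inf_assoc, inf_comm e f, ← inf_assoc, hgf, bot_inf_eq])
  tfae_have 4 → 1
  · rintro h ⟨g, hgne, hge, hgf⟩
    exact hgne (by rw [← inf_eq_left.mpr hge]; exact h g hgf)
  tfae_have 1 → 2
  · intro h φ hφ
    have hcov : IsCover {e ⊓ f} e := by
      refine ⟨by simp, fun g hgne hge => ⟨e ⊓ f, Finset.mem_singleton_self _, ?_⟩⟩
      rw [← inf_assoc, inf_eq_left.mpr hge]
      intro hgf
      exact h ⟨g, hgne, hge, hgf⟩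
    have htight := (hφ.2 e {e ⊓ f} hcov)
    cases he : φ e with
    | false => simp
    | true =>
      obtain ⟨c, hc, hct⟩ := htight.mp he
      rw [Finset.mem_singleton] at hc
      subst hc
      rw [hφ.1.2.1 e f, he, Bool.true_and] at hct
      simp [hct]
  tfae_have 2 → 3
  · intro h ξ hξ heξ
    set φ : E → Bool := fun x => decide (x ∈ ξ) with hφdef
    have hφ : IsTightChar φ := by
      refine ⟨⟨by simp [hφdef, hξ.1.2.1], fun a b => ?_, ?_⟩, ?_⟩
      · simp only [hφdef, ← Bool.decide_and]
        congr 1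
        refine propext ⟨fun hab => ⟨?_, ?_⟩, fun ⟨ha, hb⟩ => hξ.1.2.2.1 a ha b hb⟩
        · exact hξ.1.2.2.2 _ hab a inf_le_left
        · exact hξ.1.2.2.2 _ hab b inf_le_right
      · obtain ⟨x, hx⟩ := hξ.1.1
        exact ⟨x, by simp [hφdef, hx]⟩
      · intro a C hC
        simp only [hφdef, decide_eq_true_eq]
        constructor
        · intro ha; exact hξ.2 a ha C hC
        · rintro ⟨c, hc, hcξ⟩
          exact hξ.1.2.2.2 c hcξ a (hC.1 c hc)
    have heφ : φ e = true := by simp [hφdef, heξ]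
    have hfφ := le_trans (le_of_eq heφ.symm) (h φ hφ)
    exact of_decide_eq_true (le_antisymm (Bool.le_true _) hfφ)
  tfae_have 3 → 1
  · intro h
    rintro ⟨g, hgne, hge, hgf⟩
    obtain ⟨ξ, hξ, hgξ⟩ := exists_tight_filter hgne
    have heξ : e ∈ ξ := hξ.1.2.2.2 g hgξ e hge
    have hfξ : f ∈ ξ := h ξ hξ heξ
    exact hξ.1.2.1 (hgf ▸ hξ.1.2.2.1 g hgξ f hfξ)
  tfae_finish
end

section
/- Let E be a semilattice with zero and, for e ∈ E, let D_e = {ξ ∈ Ê_tight : e ∈ ξ} be the set of tight filters containing e. Then for all e, f ∈ E: e ≼ f if and only if D_e ⊆ D_f, and e ≈ f if and only if D_e = D_f. Consequently the collection {D_e : e ∈ E} is a semilattice under intersection (with ∅ as zero), naturally isomorphic to E/≈, and in this semilattice the tight order coincides with inclusion (so tight equivalence coincides with equality). -/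
/-- The tight regular representation of a semilattice: `D e` is the set of tight filters
containing `e`. -/
def tightD {E : Type*} [SemilatticeInf E] [OrderBot E] (e : E) : Set (Set E) :=
  {ξ : Set E | IsTightFilter ξ ∧ e ∈ ξ}

section Aux

variable {E : Type*} [SemilatticeInf E] [OrderBot E]

/-- Any nonzero element lies in a maximal filter. -/
lemma exists_maximal_filter {e : E} (he : e ≠ ⊥) :
    ∃ ξ : Set E, IsFilterOn ξ ∧ e ∈ ξ ∧
      ∀ ζ : Set E, IsFilterOn ζ → ξ ⊆ ζ → ζ = ξ := by
  set S : Set (Set E) := {ξ | IsFilterOn ξ ∧ e ∈ ξ}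
  have hx : {x : E | e ≤ x} ∈ S := by
    refine ⟨⟨⟨e, le_rfl⟩, fun hb => he (le_bot_iff.mp hb), ?_, ?_⟩, le_rfl⟩
    · intro a ha b hb; exact le_inf ha hb
    · intro a ha f haf; exact le_trans ha haf
  have hzorn : ∀ c ⊆ S, IsChain (· ⊆ ·) c → c.Nonempty → ∃ ub ∈ S, ∀ s ∈ c, s ⊆ ub := by
    intro c hcS hchain hcne
    obtain ⟨ξ₀, hξ₀⟩ := hcne
    refine ⟨⋃₀ c, ⟨⟨⟨e, Set.mem_sUnion.mpr ⟨ξ₀, hξ₀, (hcS hξ₀).2⟩⟩, ?_, ?_, ?_⟩,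
      Set.mem_sUnion.mpr ⟨ξ₀, hξ₀, (hcS hξ₀).2⟩⟩, fun s hs => Set.subset_sUnion_of_mem hs⟩
    · rintro ⟨ξ, hξ, hbot⟩
      exact (hcS hξ).1.2.1 hbot
    · rintro a ⟨ξ₁, hξ₁, ha⟩ b ⟨ξ₂, hξ₂, hb⟩
      rcases hchain.total hξ₁ hξ₂ with h | h
      · exact ⟨ξ₂, hξ₂, (hcS hξ₂).1.2.2.1 a (h ha) b hb⟩
      · exact ⟨ξ₁, hξ₁, (hcS hξ₁).1.2.2.1 a ha b (h hb)⟩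
    · rintro a ⟨ξ₁, hξ₁, ha⟩ f haf
      exact ⟨ξ₁, hξ₁, (hcS hξ₁).1.2.2.2 a ha f haf⟩
  obtain ⟨m, hxm, hm⟩ := zorn_subset_nonempty S hzorn _ hx
  refine ⟨m, hm.prop.1, hm.prop.2, fun ζ hζ hsub => ?_⟩
  have : ζ ∈ S := ⟨hζ, hsub hm.prop.2⟩
  exact hm.eq_of_ge this hsub

/-- In a maximal filter, any element compatible with the whole filter belongs to it. -/
lemma maximal_filter_mem {ξ : Set E} (hξ : IsFilterOn ξ)
    (hmax : ∀ ζ : Set E, IsFilterOn ζ → ξ ⊆ ζ → ζ = ξ)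
    {e : E} (he : ∀ x ∈ ξ, e ⊓ x ≠ ⊥) : e ∈ ξ := by
  set ζ : Set E := {y | ∃ x ∈ ξ, e ⊓ x ≤ y}
  obtain ⟨x₀, hx₀⟩ := hξ.1
  have hζ : IsFilterOn ζ := by
    refine ⟨⟨e ⊓ x₀, ⟨x₀, hx₀, le_rfl⟩⟩, ?_, ?_, ?_⟩
    · rintro ⟨x, hx, hle⟩
      exact he x hx (le_bot_iff.mp hle)
    · rintro a ⟨x, hx, hxa⟩ b ⟨y, hy, hyb⟩
      refine ⟨x ⊓ y, hξ.2.2.1 x hx y hy, ?_⟩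
      refine le_inf (le_trans ?_ hxa) (le_trans ?_ hyb)
      · exact inf_le_inf_left e inf_le_left
      · exact inf_le_inf_left e inf_le_right
    · rintro a ⟨x, hx, hxa⟩ f haf
      exact ⟨x, hx, le_trans hxa haf⟩
  have hsub : ξ ⊆ ζ := fun y hy => ⟨y, hy, inf_le_right⟩
  have : ζ = ξ := hmax ζ hζ hsub
  rw [← this]
  exact ⟨x₀, hx₀, inf_le_left⟩

/-- Maximal filters are tight. -/
lemma maximal_filter_tight {ξ : Set E} (hξ : IsFilterOn ξ)
    (hmax : ∀ ζ : Set E, IsFilterOn ζ → ξ ⊆ ζ → ζ = ξ) : IsTightFilter ξ := by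
  refine ⟨hξ, fun f hf C hC => ?_⟩
  by_contra hcon
  push_neg at hcon
  -- for each c ∈ C there is x with x ∈ ξ and c ⊓ x = ⊥
  have hch : ∀ c ∈ C, ∃ x ∈ ξ, c ⊓ x = ⊥ := by
    intro c hc
    by_contra h
    push_neg at h
    exact hcon c hc (maximal_filter_mem hξ hmax h)
  have hfne : f ≠ ⊥ := fun h => hξ.2.1 (h ▸ hf)
  rcases C.eq_empty_or_nonempty with rfl | hCne
  · obtain ⟨c, hc, -⟩ := hC.2 f hfne le_rfl
    exact absurd hc (Finset.notMem_empty c)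
  · choose w hw hwbot using hch
    classical
    set v : E → E := fun c => if h : c ∈ C then w c h else f
    have hv : ∀ c ∈ C, v c ∈ ξ := by
      intro c hc; simp only [v, dif_pos hc]; exact hw c hc
    have hinf : C.inf' hCne v ∈ ξ :=
      Finset.inf'_mem ξ (hξ.2.2.1) C hCne v hv
    set x : E := f ⊓ C.inf' hCne v
    have hxξ : x ∈ ξ := hξ.2.2.1 f hf _ hinf
    have hxne : x ≠ ⊥ := fun h => hξ.2.1 (h ▸ hxξ)
    obtain ⟨c, hc, hxc⟩ := hC.2 x hxne inf_le_left
    apply hxc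
    have h1 : x ≤ w c hc := by
      refine le_trans inf_le_right (le_trans (Finset.inf'_le v hc) ?_)
      simp only [v, dif_pos hc]
      exact le_rfl
    have : x ⊓ c ≤ c ⊓ w c hc := le_inf inf_le_right (le_trans inf_le_left h1)
    rw [← le_bot_iff]
    exact le_trans this (le_of_eq (hwbot c hc))

/-- Every nonzero element lies in a tight filter. -/
lemma exists_tight_filter_s3 {e : E} (he : e ≠ ⊥) :
    ∃ ξ : Set E, IsTightFilter ξ ∧ e ∈ ξ := by
  obtain ⟨ξ, h1, h2, h3⟩ := exists_maximal_filter he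
  exact ⟨ξ, maximal_filter_tight h1 h3, h2⟩

lemma tightBelow_iff_tightD {e f : E} : TightBelow e f ↔ tightD e ⊆ tightD f := by
  constructor
  · intro h ξ hξ
    obtain ⟨hξt, heξ⟩ := hξ
    -- {e ⊓ f} is a cover for e
    have hcov : IsCover {e ⊓ f} e := by
      refine ⟨by simp, fun g hg hge => ⟨e ⊓ f, Finset.mem_singleton_self _, ?_⟩⟩
      have hgef : g ⊓ (e ⊓ f) = g ⊓ f := by
        rw [← inf_assoc, inf_eq_left.mpr hge]
      rw [hgef]
      intro hgf
      exact h ⟨g, hg, hge, hgf⟩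
    obtain ⟨c, hc, hcξ⟩ := hξt.2 e heξ _ hcov
    rw [Finset.mem_singleton] at hc
    subst hc
    exact ⟨hξt, hξt.1.2.2.2 _ hcξ f inf_le_right⟩
  · intro h
    rintro ⟨g, hg, hge, hgf⟩
    obtain ⟨ξ, hξt, hgξ⟩ := exists_tight_filter_s3 hg
    have heξ : e ∈ ξ := hξt.1.2.2.2 g hgξ e hge
    have hfξ : f ∈ ξ := (h ⟨hξt, heξ⟩).2
    exact hξt.1.2.1 (hgf ▸ hξt.1.2.2.1 g hgξ f hfξ)

end Aux

/-- For `D e = {ξ ∈ Ê_tight : e ∈ ξ}` one has `e ≼ f ↔ D e ⊆ D f` and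
`e ≈ f ↔ D e = D f`; moreover the collection `{D e}` is a semilattice under intersection
with `∅` as zero (`D` preserves meets and zero, hence `{D e}` is naturally isomorphic to
`E/≈`), and in this semilattice the tight order (witnesses taken within the range of `D`)
coincides with inclusion. -/
theorem tightD_spec {E : Type*} [SemilatticeInf E] [OrderBot E] :
    (∀ e f : E, TightBelow e f ↔ tightD e ⊆ tightD f) ∧
    (∀ e f : E, TightEquiv e f ↔ tightD e = tightD f) ∧
    (∀ e f : E, tightD (e ⊓ f) = tightD e ∩ tightD f) ∧
    tightD (⊥ : E) = (∅ : Set (Set E)) ∧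
    (∀ e f : E,
      (¬ ∃ g : E, tightD g ≠ ∅ ∧ tightD g ⊆ tightD e ∧ tightD g ∩ tightD f = ∅) ↔
        tightD e ⊆ tightD f) := by
  have hmeet : ∀ e f : E, tightD (e ⊓ f) = tightD e ∩ tightD f := by
    intro e f
    ext ξ
    constructor
    · rintro ⟨hξ, hef⟩
      exact ⟨⟨hξ, hξ.1.2.2.2 _ hef e inf_le_left⟩, ⟨hξ, hξ.1.2.2.2 _ hef f inf_le_right⟩⟩
    · rintro ⟨⟨hξ, he⟩, ⟨-, hf⟩⟩
      exact ⟨hξ, hξ.1.2.2.1 e he f hf⟩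
  have hbot : tightD (⊥ : E) = (∅ : Set (Set E)) := by
    ext ξ
    simp only [tightD, Set.mem_setOf_eq, Set.mem_empty_iff_false, iff_false, not_and]
    intro hξ
    exact hξ.1.2.1
  have hne : ∀ g : E, g ≠ ⊥ → tightD g ≠ ∅ := by
    intro g hg h
    obtain ⟨ξ, hξ, hgξ⟩ := exists_tight_filter_s3 hg
    exact absurd (h ▸ (⟨hξ, hgξ⟩ : ξ ∈ tightD g)) (Set.notMem_empty ξ)
  refine ⟨fun e f => tightBelow_iff_tightD, ?_, hmeet, hbot, ?_⟩
  · intro e f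
    rw [TightEquiv, tightBelow_iff_tightD, tightBelow_iff_tightD]
    exact ⟨fun h => le_antisymm h.1 h.2, fun h => ⟨h.le, h.ge⟩⟩
  · intro e f
    rw [← tightBelow_iff_tightD]
    constructor
    · intro h
      by_contra hef
      apply h
      rw [TightBelow] at hef
      push_neg at hef
      obtain ⟨g, hg, hge, hgf⟩ := hef
      refine ⟨g, hne g hg, ?_, ?_⟩
      · rintro ξ ⟨hξ, hgξ⟩
        exact ⟨hξ, hξ.1.2.2.2 g hgξ e hge⟩
      · rw [← hmeet]
        ext ξ
        simp only [Set.mem_empty_iff_false, iff_false]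
        rintro ⟨hξ, hgfξ⟩
        exact hξ.1.2.1 (hgf ▸ hgfξ)
    · rintro h ⟨g, hgne, hge, hgf⟩
      obtain ⟨ξ, hξ⟩ := Set.nonempty_iff_ne_empty.mpr hgne
      have : ξ ∈ tightD g ∩ tightD f := ⟨hξ, (tightBelow_iff_tightD.mp h) (hge hξ)⟩
      rw [hgf] at this
      exact this
end

section
/- Let E and F be semilattices with zero and let h : E → F be a homomorphism of semilattices with zero. Then the following are equivalent: (i) ker(h) = {0}, i.e. h(e) = 0 implies e = 0; (ii) h is tightly injective; (iii) for all e, f ∈ E, h(e) ≼ h(f) implies e ≼ f. -/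
/-- For a homomorphism `h` of semilattices with zero, the following are
equivalent: (i) the kernel of `h` is trivial; (ii) `h` is tightly injective; (iii) `h`
reflects the tight order. -/
theorem tightlyInjective_tfae {E F : Type*} [SemilatticeInf E] [OrderBot E]
    [SemilatticeInf F] [OrderBot F]
    (h : E → F) (h0 : h ⊥ = ⊥) (hinf : ∀ a b : E, h (a ⊓ b) = h a ⊓ h b) :
    List.TFAE
      [∀ e : E, h e = ⊥ → e = ⊥,
       TightlyInjective h,
       ∀ e f : E, TightBelow (h e) (h f) → TightBelow e f] := by
  tfae_have 1 → 3 := by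
    intro hk e f hef ⟨g, hg, hge, hgf⟩
    exact hef ⟨h g, fun hb => hg (hk g hb),
      by rw [show g = g ⊓ e from (inf_eq_left.mpr hge).symm, hinf]; exact inf_le_right,
      by rw [← hinf, hgf, h0]⟩
  tfae_have 3 → 2 := fun h3 e₁ e₂ ⟨a, b⟩ => ⟨h3 _ _ a, h3 _ _ b⟩
  tfae_have 2 → 1 := by
    intro h2 e he
    have : TightEquiv e ⊥ := by
      refine h2 e ⊥ ⟨?_, ?_⟩ <;>
        exact fun ⟨g, hg, hge, _⟩ => hg (le_bot_iff.mp (by simp_all))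
    by_contra hne
    exact this.1 ⟨e, hne, le_rfl, inf_bot_eq e⟩
  tfae_finish
end

section
/- Let S be an inverse semigroup with zero and let e, f be idempotent elements of S. Then e is tightly below f within the idempotent semilattice E(S) (i.e., there is no nonzero idempotent g with g ≤ e and gf = 0) if and only if e is tightly below f in the inverse-semigroup sense (i.e., there is a finite cover C for e = e*e such that ec = fc for all c ∈ C). -/
/-- An inverse semigroup with zero: a semigroup with zero in which every element `s` has a
unique generalized inverse `sInv s` with `s * sInv s * s = s` and `sInv s * s * sInv s = sInv s`. -/
class InverseSemigroup0 (S : Type*) extends SemigroupWithZero S where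
  sInv : S → S
  mul_sInv_mul : ∀ s : S, s * sInv s * s = s
  sInv_mul_sInv : ∀ s : S, sInv s * s * sInv s = sInv s
  sInv_unique : ∀ s t : S, s * t * s = s → t * s * t = t → t = sInv s

open InverseSemigroup0 in
/-- `C` is a (finite) cover for the idempotent `f` within the idempotent semilattice `E(S)`:
all members of `C` are idempotents below `f`, and every nonzero idempotent `g ≤ f`
intersects some member of `C`. (Here `e ≤ f` means `e * f = e`.) -/
def IdemCover {S : Type*} [InverseSemigroup0 S] (C : Finset S) (f : S) : Prop :=
  (∀ c ∈ C, IsIdempotentElem c ∧ c * f = c) ∧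
  ∀ g : S, IsIdempotentElem g → g ≠ 0 → g * f = g → ∃ c ∈ C, g * c ≠ 0

/-- The tight order on the idempotent semilattice `E(S)`: `e ≼ f` iff there is no nonzero
idempotent `g` with `g ≤ e` and `g * f = 0`. -/
def IdemTightBelow {S : Type*} [InverseSemigroup0 S] (e f : S) : Prop :=
  ¬ ∃ g : S, IsIdempotentElem g ∧ g ≠ 0 ∧ g * e = g ∧ g * f = 0

open InverseSemigroup0 in
/-- The tight order on an inverse semigroup with zero: `s ≼ t` iff there is a finite cover
`C` for `s* s` such that `s * c = t * c` for all `c ∈ C`. -/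
def TightBelowS {S : Type*} [InverseSemigroup0 S] (s t : S) : Prop :=
  ∃ C : Finset S, IdemCover C (sInv s * s) ∧ ∀ c ∈ C, s * c = t * c

/-- Tight equivalence on an inverse semigroup with zero. -/
def TightEquivS {S : Type*} [InverseSemigroup0 S] (s t : S) : Prop :=
  TightBelowS s t ∧ TightBelowS t s

open InverseSemigroup0

section Aux
variable {S : Type*} [InverseSemigroup0 S]

lemma sInv_of_idem {e : S} (he : IsIdempotentElem e) : sInv e = e :=
  (sInv_unique e e (by rw [he, he]) (by rw [he, he])).symm

lemma idem_mul_idem {e f : S} (he : IsIdempotentElem e) (hf : IsIdempotentElem f) :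
    IsIdempotentElem (e * f) := by
  set x := sInv (e * f) with hx
  have he' : ∀ a : S, e * (e * a) = e * a := fun a => by rw [← mul_assoc, he]
  have hf' : ∀ a : S, f * (f * a) = f * a := fun a => by rw [← mul_assoc, hf]
  have key : e * (f * (x * (e * f))) = e * f := by
    have := mul_sInv_mul (e * f); simpa [mul_assoc] using this
  have key2 : x * (e * (f * x)) = x := by
    have := sInv_mul_sInv (e * f); simpa [mul_assoc] using this
  have h3 : x * (e * (f * (x * e))) = x * e := by
    conv_lhs => rw [show f * (x * e) = f * x * e from (mul_assoc ..).symm,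
      show e * (f * x * e) = (e * (f * x)) * e from by simp [mul_assoc],
      ← mul_assoc, key2]
  have hfxe : f * x * e = x := by
    apply sInv_unique
    · simp only [mul_assoc]
      rw [hf', ← mul_assoc e e, he]
      exact key
    · simp only [mul_assoc]
      rw [← mul_assoc e e, he, hf']
      rw [h3]
  have hxx : IsIdempotentElem x := by
    show x * x = x
    calc x * x = (f * x * e) * (f * x * e) := by rw [hfxe]
      _ = f * (x * (e * (f * (x * e)))) := by simp [mul_assoc]
      _ = f * (x * e) := by rw [h3]
      _ = x := by rw [← mul_assoc, hfxe]
  have hef : e * f = x := by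
    have h := sInv_unique x (e * f) (by simpa [mul_assoc] using key2)
      (by simpa [mul_assoc] using key)
    rw [h, sInv_of_idem hxx]
  show (e * f) * (e * f) = e * f
  rw [hef]; exact hxx

lemma idem_comm {e f : S} (he : IsIdempotentElem e) (hf : IsIdempotentElem f) :
    e * f = f * e := by
  have h1 := idem_mul_idem he hf
  have h2 := idem_mul_idem hf he
  have he' : ∀ a : S, e * (e * a) = e * a := fun a => by rw [← mul_assoc, he]
  have hf' : ∀ a : S, f * (f * a) = f * a := fun a => by rw [← mul_assoc, hf]
  have ha : (e * f) * (f * e) * (e * f) = e * f := by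
    simp only [mul_assoc, hf', he']
    simpa [mul_assoc] using h1.eq
  have hb : (f * e) * (e * f) * (f * e) = f * e := by
    simp only [mul_assoc, hf', he']
    simpa [mul_assoc] using h2.eq
  have := sInv_unique (e * f) (f * e) ha hb
  rw [this, sInv_of_idem h1]

end Aux

/-- For idempotents `e, f` in an inverse semigroup with zero, `e` is
tightly below `f` within the idempotent semilattice `E(S)` iff `e` is tightly below `f`
in the inverse-semigroup sense, i.e. there is a finite cover `C` for `e (= sInv e * e)`
with `e * c = f * c` for all `c ∈ C`. -/
theorem idemTightBelow_iff_tightBelowS {S : Type*} [InverseSemigroup0 S] (e f : S)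
    (he : IsIdempotentElem e) (hf : IsIdempotentElem f) :
    IdemTightBelow e f ↔ ∃ C : Finset S, IdemCover C e ∧ ∀ c ∈ C, e * c = f * c := by
  constructor
  · intro h
    refine ⟨{e * f}, ⟨?_, ?_⟩, ?_⟩
    · intro c hc
      rw [Finset.mem_singleton] at hc
      subst hc
      refine ⟨idem_mul_idem he hf, ?_⟩
      rw [mul_assoc, ← idem_comm he hf, ← mul_assoc, he]
    · intro g hg hg0 hge
      refine ⟨e * f, Finset.mem_singleton_self _, ?_⟩
      intro h0
      rw [← mul_assoc, hge] at h0
      exact h (⟨g, hg, hg0, hge, h0⟩)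
    · intro c hc
      rw [Finset.mem_singleton] at hc
      subst hc
      rw [← mul_assoc, he, ← mul_assoc, ← idem_comm he hf, mul_assoc, hf]
  · rintro ⟨C, ⟨hCmem, hCcov⟩, hec⟩ ⟨g, hg, hg0, hge, hgf⟩
    obtain ⟨c, hc, hgc⟩ := hCcov g hg hg0 hge
    obtain ⟨hcidem, hce⟩ := hCmem c hc
    have hfc : c = f * c := by
      rw [← hec c hc, idem_comm he hcidem, hce]
    apply hgc
    rw [hfc, ← mul_assoc, hgf, zero_mul]
end

section
/- Let h : E → F be a tight homomorphism of semilattices with zero and let ĥ : F̂_tight → Ê_tight be the dual map ĥ(ψ) = ψ ∘ h. Then (i) ĥ is continuous, and (ii) if ĥ is bijective, then ĥ⁻¹ is also continuous, so ĥ is a homeomorphism. -/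
namespace DualAux

variable {ι : Type*} {E : Type*} [SemilatticeInf E] [OrderBot E]

/-- "Tight character or zero" predicate: defines a closed subset of `Bool^E`. -/
def TC (φ : E → Bool) : Prop :=
  φ ⊥ = false ∧ (∀ e f : E, φ (e ⊓ f) = (φ e && φ f)) ∧
    ∀ f : E, ∀ C : Finset E, IsCover C f → (φ f = true ↔ ∃ c ∈ C, φ c = true)

lemma tc_of_tightChar {φ : E → Bool} (hφ : IsTightChar φ) : TC φ :=
  ⟨hφ.1.1, hφ.1.2.1, hφ.2⟩

lemma tc_zero : TC (fun _ : E => false) := by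
  refine ⟨rfl, fun _ _ => rfl, fun f C _ => ?_⟩
  simp

lemma tightChar_of_tc {φ : E → Bool} (hφ : TC φ) (hne : φ ≠ fun _ => false) :
    IsTightChar φ := by
  refine ⟨⟨hφ.1, hφ.2.1, ?_⟩, hφ.2.2⟩
  by_contra hc
  push_neg at hc
  exact hne (funext fun e => by simpa using hc e)

lemma coverFam_image [DecidableEq E] (C : Finset ι) (v : ι → E) (f : E) (h : IsCoverFam C v f) :
    IsCover (C.image v) f := by
  constructor
  · intro c hc
    obtain ⟨i, hi, rfl⟩ := Finset.mem_image.mp hc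
    exact h.1 i hi
  · intro g hg hgf
    obtain ⟨i, hi, hmeet⟩ := h.2 g hg hgf
    exact ⟨v i, Finset.mem_image_of_mem v hi, hmeet⟩

lemma isClosed_tc : IsClosed {φ : E → Bool | TC φ} := by
  have hbase : ∀ (x : E) (b : Bool), IsClosed {φ : E → Bool | φ x = b} :=
    fun x b => (isClosed_singleton).preimage (continuous_apply x)
  have hopen : ∀ (x : E) (b : Bool), IsOpen {φ : E → Bool | φ x = b} := by
    intro x b
    show IsOpen ((fun φ : E → Bool => φ x) ⁻¹' {b})
    exact (isOpen_discrete _).preimage (continuous_apply x)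
  have h1 : IsClosed {φ : E → Bool | φ ⊥ = false} := hbase ⊥ false
  have h2 : IsClosed {φ : E → Bool | ∀ e f : E, φ (e ⊓ f) = (φ e && φ f)} := by
    have heq : {φ : E → Bool | ∀ e f : E, φ (e ⊓ f) = (φ e && φ f)}
        = ⋂ (e : E), ⋂ (f : E), {φ : E → Bool | φ (e ⊓ f) = (φ e && φ f)} := by
      ext φ; simp
    rw [heq]
    refine isClosed_iInter fun e => isClosed_iInter fun f => ?_
    refine isClosed_eq (continuous_apply _) ?_
    show Continuous fun φ : E → Bool => (fun p : Bool × Bool => p.1 && p.2) (φ e, φ f)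
    exact Continuous.comp (continuous_of_discreteTopology
      (f := fun p : Bool × Bool => p.1 && p.2))
      ((continuous_apply e).prodMk (continuous_apply f))
  have h3 : IsClosed {φ : E → Bool | ∀ f : E, ∀ C : Finset E, IsCover C f →
      (φ f = true ↔ ∃ c ∈ C, φ c = true)} := by
    have heq : {φ : E → Bool | ∀ f : E, ∀ C : Finset E, IsCover C f →
        (φ f = true ↔ ∃ c ∈ C, φ c = true)}
        = ⋂ (f : E), ⋂ (C : Finset E), ⋂ (_ : IsCover C f),
          ({φ : E → Bool | φ f = true → ∃ c ∈ C, φ c = true} ∩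
           {φ : E → Bool | (∃ c ∈ C, φ c = true) → φ f = true}) := by
      ext φ
      simp only [Set.mem_iInter, Set.mem_inter_iff, Set.mem_setOf_eq]
      constructor
      · exact fun hφ f C hC => ⟨(hφ f C hC).1, (hφ f C hC).2⟩
      · exact fun hφ f C hC => ⟨(hφ f C hC).1, (hφ f C hC).2⟩
    rw [heq]
    refine isClosed_iInter fun f => isClosed_iInter fun C => isClosed_iInter fun _ =>
      IsClosed.inter ?_ ?_
    · rw [← isOpen_compl_iff]
      have hc : {φ : E → Bool | φ f = true → ∃ c ∈ C, φ c = true}ᶜ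
          = {φ : E → Bool | φ f = true} ∩ ⋂ c ∈ C, {φ : E → Bool | φ c = false} := by
        ext φ
        simp [not_exists, Classical.not_imp]
      rw [hc]
      exact (hopen f true).inter (isOpen_biInter_finset fun c _ => hopen c false)
    · rw [← isOpen_compl_iff]
      have hc : {φ : E → Bool | (∃ c ∈ C, φ c = true) → φ f = true}ᶜ
          = (⋃ c ∈ C, {φ : E → Bool | φ c = true}) ∩ {φ : E → Bool | φ f = false} := by
        ext φ
        simp [Classical.not_imp]
        tauto
      rw [hc]
      exact ((isOpen_biUnion fun c _ => hopen c true)).inter (hopen f false)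
  have : {φ : E → Bool | TC φ}
      = {φ : E → Bool | φ ⊥ = false} ∩
        ({φ : E → Bool | ∀ e f : E, φ (e ⊓ f) = (φ e && φ f)} ∩
         {φ : E → Bool | ∀ f : E, ∀ C : Finset E, IsCover C f →
          (φ f = true ↔ ∃ c ∈ C, φ c = true)}) := by
    ext φ; simp [TC, Set.mem_setOf_eq, and_assoc]
  rw [this]
  exact h1.inter (h2.inter h3)

end DualAux

/-- If `h : E → F` is a tight homomorphism of semilattices with zero, then
the dual map `ĥ : F̂_tight → Ê_tight`, `ĥ ψ = ψ ∘ h`, is well defined and (i) continuous,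
and (ii) if it is bijective then it is a homeomorphism. (Tight spectra carry the subspace
topology from the product topology on `E → Bool`, with `Bool` discrete.) -/
theorem dualMap_continuous_and_homeo {E F : Type*} [SemilatticeInf E] [OrderBot E]
    [SemilatticeInf F] [OrderBot F]
    (h : E → F) (h0 : h ⊥ = ⊥) (hinf : ∀ a b : E, h (a ⊓ b) = h a ⊓ h b)
    (ht : IsTightHom h) :
    ∃ hmap : ∀ ψ : {ψ : F → Bool // IsTightChar ψ}, IsTightChar (fun e => ψ.1 (h e)),
      Continuous (fun ψ : {ψ : F → Bool // IsTightChar ψ} =>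
        (⟨fun e => ψ.1 (h e), hmap ψ⟩ : {φ : E → Bool // IsTightChar φ})) ∧
      (Function.Bijective (fun ψ : {ψ : F → Bool // IsTightChar ψ} =>
          (⟨fun e => ψ.1 (h e), hmap ψ⟩ : {φ : E → Bool // IsTightChar φ})) →
        IsHomeomorph (fun ψ : {ψ : F → Bool // IsTightChar ψ} =>
          (⟨fun e => ψ.1 (h e), hmap ψ⟩ : {φ : E → Bool // IsTightChar φ}))) := by
  classical
  have key : ∀ ψ : F → Bool, IsTightChar ψ → IsTightChar fun e => ψ (h e) := by
    intro ψ hψ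
    have tight : ∀ e : E, ∀ C : Finset E, IsCover C e →
        (ψ (h e) = true ↔ ∃ c ∈ C, ψ (h c) = true) := by
      intro e C hC
      have hcov := DualAux.coverFam_image C h (h e) (ht.2 e C hC)
      have hiff := hψ.2 (h e) (C.image h) hcov
      constructor
      · intro h1
        obtain ⟨x, hx, hxval⟩ := hiff.1 h1
        obtain ⟨c, hc, rfl⟩ := Finset.mem_image.mp hx
        exact ⟨c, hc, hxval⟩
      · rintro ⟨c, hc, hcval⟩
        exact hiff.2 ⟨h c, Finset.mem_image_of_mem h hc, hcval⟩
    refine ⟨⟨?_, ?_, ?_⟩, tight⟩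
    · show ψ (h ⊥) = false; rw [h0]; exact hψ.1.1
    · intro a b; show ψ (h (a ⊓ b)) = _; rw [hinf]; exact hψ.1.2.1 _ _
    · obtain ⟨f, hf⟩ := hψ.1.2.2
      obtain ⟨C, hC⟩ := ht.1 f
      have hcov := DualAux.coverFam_image C (fun e => f ⊓ h e) f hC
      obtain ⟨x, hx, hxval⟩ := (hψ.2 f _ hcov).1 hf
      obtain ⟨c, hc, rfl⟩ := Finset.mem_image.mp hx
      refine ⟨c, ?_⟩
      have hm := hψ.1.2.1 f (h c)
      rw [hxval] at hm
      exact ((Bool.and_eq_true _ _).mp hm.symm).2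
  have contG : Continuous (fun ψ : {ψ : F → Bool // IsTightChar ψ} =>
      (⟨fun e => ψ.1 (h e), key ψ.1 ψ.2⟩ : {φ : E → Bool // IsTightChar φ})) := by
    apply Continuous.subtype_mk
    exact continuous_pi fun e => (continuous_apply (h e)).comp continuous_subtype_val
  refine ⟨fun ψ => key ψ.1 ψ.2, contG, ?_⟩
  intro hbij
  have tc_comp : ∀ ψ : F → Bool, DualAux.TC ψ → DualAux.TC (fun e => ψ (h e)) := by
    intro ψ hψ
    by_cases hz : ψ = fun _ => false
    · subst hz; exact DualAux.tc_zero
    · exact DualAux.tc_of_tightChar (key ψ (DualAux.tightChar_of_tc hψ hz))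
  have comp_ne : ∀ ψ : F → Bool, IsTightChar ψ →
      (fun e => ψ (h e)) ≠ fun _ => false := by
    intro ψ hψ hz
    obtain ⟨e, he⟩ := (key ψ hψ).1.2.2
    have hfe : ψ (h e) = false := congrFun hz e
    exact Bool.false_ne_true (hfe ▸ (he : ψ (h e) = true))
  letI SF := {φ : F → Bool // DualAux.TC φ}
  letI SE := {φ : E → Bool // DualAux.TC φ}
  let Hfun : SF → SE := fun ψ => ⟨fun e => ψ.1 (h e), tc_comp ψ.1 ψ.2⟩
  have Hcont : Continuous Hfun := by
    apply Continuous.subtype_mk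
    exact continuous_pi fun e => (continuous_apply (h e)).comp continuous_subtype_val
  have Hinj : Function.Injective Hfun := by
    intro ψ₁ ψ₂ hEq
    have hEq' : (fun e => ψ₁.1 (h e)) = fun e => ψ₂.1 (h e) := congrArg Subtype.val hEq
    by_cases h1 : ψ₁.1 = fun _ => false
    · by_cases h2 : ψ₂.1 = fun _ => false
      · exact Subtype.ext (h1.trans h2.symm)
      · exfalso
        apply comp_ne ψ₂.1 (DualAux.tightChar_of_tc ψ₂.2 h2)
        rw [← hEq', h1]
    · by_cases h2 : ψ₂.1 = fun _ => false
      · exfalso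
        apply comp_ne ψ₁.1 (DualAux.tightChar_of_tc ψ₁.2 h1)
        rw [hEq', h2]
      · have t1 := DualAux.tightChar_of_tc ψ₁.2 h1
        have t2 := DualAux.tightChar_of_tc ψ₂.2 h2
        have := hbij.1 (a₁ := ⟨ψ₁.1, t1⟩) (a₂ := ⟨ψ₂.1, t2⟩) (Subtype.ext hEq')
        have hval := Subtype.ext_iff.mp this
        exact Subtype.ext hval
  have Hsurj : Function.Surjective Hfun := by
    intro φ
    by_cases h1 : φ.1 = fun _ => false
    · exact ⟨⟨fun _ => false, DualAux.tc_zero⟩, Subtype.ext h1.symm⟩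
    · obtain ⟨ψ, hψ⟩ := hbij.2 ⟨φ.1, DualAux.tightChar_of_tc φ.2 h1⟩
      have hval := Subtype.ext_iff.mp hψ
      exact ⟨⟨ψ.1, DualAux.tc_of_tightChar ψ.2⟩, Subtype.ext hval⟩
  haveI : CompactSpace SF :=
    isCompact_iff_compactSpace.mp DualAux.isClosed_tc.isCompact
  let Heq : SF ≃ SE := Equiv.ofBijective Hfun ⟨Hinj, Hsurj⟩
  let Hhomeo : SF ≃ₜ SE :=
    Continuous.homeoOfEquivCompactToT2 (f := Heq) Hcont
  let Geq := Equiv.ofBijective _ hbij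
  have key2 : ∀ φ : {φ : E → Bool // IsTightChar φ},
      ((Geq.symm φ).1 : F → Bool)
        = (Hhomeo.symm ⟨φ.1, DualAux.tc_of_tightChar φ.2⟩).1 := by
    intro φ
    have h1 : Geq (Geq.symm φ) = φ := Equiv.apply_symm_apply _ _
    have h2 : Hhomeo ⟨(Geq.symm φ).1, DualAux.tc_of_tightChar (Geq.symm φ).2⟩
        = ⟨φ.1, DualAux.tc_of_tightChar φ.2⟩ := by
      apply Subtype.ext
      have hval := Subtype.ext_iff.mp h1
      exact hval
    rw [← h2, Homeomorph.symm_apply_apply]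
  have hGsymm : Continuous Geq.symm := by
    rw [continuous_induced_rng]
    have heq2 : (Subtype.val ∘ Geq.symm)
        = fun φ : {φ : E → Bool // IsTightChar φ} =>
          (Hhomeo.symm ⟨φ.1, DualAux.tc_of_tightChar φ.2⟩).1 := funext key2
    rw [heq2]
    exact continuous_subtype_val.comp (Hhomeo.symm.continuous.comp
      (Continuous.subtype_mk continuous_subtype_val _))
  exact (Homeomorph.mk Geq contG hGsymm).isHomeomorph
end

section
/- Let h : E → F be a tight homomorphism of semilattices with zero. Then the dual map ĥ : F̂_tight → Ê_tight, ĥ(ψ) = ψ ∘ h, is order-injective with respect to the spectral orders if and only if h is tightly surjective. -/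
section Aux

open Classical

variable {G : Type*} [SemilatticeInf G] [OrderBot G]

/-- Characters are monotone. -/
lemma char_le_of_le {φ : G → Bool} (hmul : ∀ e f : G, φ (e ⊓ f) = (φ e && φ f))
    {a b : G} (hab : a ≤ b) (ha : φ a = true) : φ b = true := by
  have h1 := hmul a b
  rw [inf_eq_left.2 hab, ha] at h1
  simpa using h1.symm

/-- Every nonzero element lies in a maximal (ultra)filter. -/
lemma exists_maxFilter {g : G} (hg : g ≠ ⊥) :
    ∃ ξ : Set G, IsFilterOn ξ ∧ g ∈ ξ ∧ ∀ f : G, (∀ a ∈ ξ, f ⊓ a ≠ ⊥) → f ∈ ξ := by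
  set S : Set (Set G) := {ξ | IsFilterOn ξ ∧ g ∈ ξ} with hS
  have hbase : {f : G | g ≤ f} ∈ S := by
    refine ⟨⟨⟨g, le_refl g⟩, ?_, ?_, ?_⟩, le_refl g⟩
    · intro hb; exact hg (le_bot_iff.1 hb)
    · intro e he f hf; exact le_inf he hf
    · intro e he f hef; exact le_trans he hef
  have hchain : ∀ c ⊆ S, IsChain (· ⊆ ·) c → c.Nonempty → ∃ ub ∈ S, ∀ s ∈ c, s ⊆ ub := by
    intro c hcS hchain ⟨s₀, hs₀⟩
    refine ⟨⋃₀ c, ⟨⟨?_, ?_, ?_, ?_⟩, ?_⟩, fun s hs => Set.subset_sUnion_of_mem hs⟩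
    · obtain ⟨x, hx⟩ := (hcS hs₀).1.1
      exact ⟨x, s₀, hs₀, hx⟩
    · rintro ⟨s, hs, hbot⟩
      exact (hcS hs).1.2.1 hbot
    · rintro e ⟨s₁, hs₁, he⟩ f ⟨s₂, hs₂, hf⟩
      rcases hchain.total hs₁ hs₂ with hsub | hsub
      · exact ⟨s₂, hs₂, (hcS hs₂).1.2.2.1 e (hsub he) f hf⟩
      · exact ⟨s₁, hs₁, (hcS hs₁).1.2.2.1 e he f (hsub hf)⟩
    · rintro e ⟨s, hs, he⟩ f hef
      exact ⟨s, hs, (hcS hs).1.2.2.2 e he f hef⟩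
    · exact ⟨s₀, hs₀, (hcS hs₀).2⟩
  obtain ⟨m, -, hmS, hmax⟩ := zorn_subset_nonempty S hchain _ hbase
  refine ⟨m, hmS.1, hmS.2, ?_⟩
  intro f hf
  set m' : Set G := {x | ∃ a ∈ m, f ⊓ a ≤ x} with hm'
  have hm'S : m' ∈ S := by
    refine ⟨⟨⟨f, g, hmS.2, inf_le_left⟩, ?_, ?_, ?_⟩, ⟨g, hmS.2, inf_le_right⟩⟩
    · rintro ⟨a, ha, hle⟩
      exact hf a ha (le_bot_iff.1 hle)
    · rintro x ⟨a, ha, hxa⟩ y ⟨b, hb, hyb⟩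
      refine ⟨a ⊓ b, hmS.1.2.2.1 a ha b hb, le_inf ?_ ?_⟩
      · exact le_trans (inf_le_inf_left f inf_le_left) hxa
      · exact le_trans (inf_le_inf_left f inf_le_right) hyb
    · rintro x ⟨a, ha, hxa⟩ y hxy
      exact ⟨a, ha, le_trans hxa hxy⟩
  have hmm' : m ⊆ m' := fun a ha => ⟨a, ha, inf_le_right⟩
  have : m' ⊆ m := hmax hm'S hmm'
  exact this ⟨g, hmS.2, inf_le_left⟩

/-- Combine finitely many orthogonality witnesses in a filter. -/
lemma filter_orth_combine {ξ : Set G} (hfil : IsFilterOn ξ) (C : Finset G)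
    (hC : ∀ c ∈ C, ∃ a ∈ ξ, c ⊓ a = ⊥) : ∃ b ∈ ξ, ∀ c ∈ C, c ⊓ b = ⊥ := by
  classical
  induction C using Finset.induction with
  | empty =>
    obtain ⟨a, ha⟩ := hfil.1
    exact ⟨a, ha, by simp⟩
  | @insert a s has ih =>
    obtain ⟨b, hb, hb2⟩ := ih (fun c hc => hC c (Finset.mem_insert_of_mem hc))
    obtain ⟨a', ha', ha'2⟩ := hC _ (Finset.mem_insert_self a s)
    refine ⟨a' ⊓ b, hfil.2.2.1 _ ha' _ hb, ?_⟩
    intro c hc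
    rcases Finset.mem_insert.1 hc with rfl | hc
    · have h1 : c ⊓ (a' ⊓ b) ≤ c ⊓ a' := inf_le_inf_left c inf_le_left
      rw [ha'2] at h1
      exact le_bot_iff.1 h1
    · have h1 : c ⊓ (a' ⊓ b) ≤ c ⊓ b := inf_le_inf_left c inf_le_right
      rw [hb2 c hc] at h1
      exact le_bot_iff.1 h1

/-- Indicator character of a set. -/
noncomputable def charOfSet (ξ : Set G) : G → Bool :=
  fun f => if f ∈ ξ then true else false

lemma charOfSet_true_iff {ξ : Set G} {f : G} : charOfSet ξ f = true ↔ f ∈ ξ := by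
  unfold charOfSet
  split <;> simp_all

/-- A maximal filter gives a tight character. -/
lemma maxFilter_tightChar {ξ : Set G} (hfil : IsFilterOn ξ)
    (hmax : ∀ f : G, (∀ a ∈ ξ, f ⊓ a ≠ ⊥) → f ∈ ξ) : IsTightChar (charOfSet ξ) := by
  have hmem : ∀ e f : G, (e ⊓ f ∈ ξ ↔ e ∈ ξ ∧ f ∈ ξ) := by
    intro e f
    constructor
    · intro hef
      exact ⟨hfil.2.2.2 _ hef e inf_le_left, hfil.2.2.2 _ hef f inf_le_right⟩
    · rintro ⟨he, hf⟩
      exact hfil.2.2.1 e he f hf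
  constructor
  · refine ⟨?_, ?_, ?_⟩
    · simp [charOfSet, hfil.2.1]
    · intro e f
      rw [Bool.eq_iff_iff]
      simp only [charOfSet_true_iff, Bool.and_eq_true]
      exact hmem e f
    · obtain ⟨a, ha⟩ := hfil.1
      exact ⟨a, charOfSet_true_iff.2 ha⟩
  · intro f C hcov
    constructor
    · intro hft
      have hfξ : f ∈ ξ := charOfSet_true_iff.1 hft
      by_contra hnone
      push_neg at hnone
      have hall : ∀ c ∈ C, ∃ a ∈ ξ, c ⊓ a = ⊥ := by
        intro c hc
        have hcn : c ∉ ξ := fun hcm => hnone c hc (charOfSet_true_iff.2 hcm)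
        by_contra hno
        push_neg at hno
        exact hcn (hmax c fun a ha => hno a ha)
      obtain ⟨b, hb, hb2⟩ := filter_orth_combine hfil C hall
      have hfb : f ⊓ b ∈ ξ := hfil.2.2.1 f hfξ b hb
      have hfbne : f ⊓ b ≠ ⊥ := fun hbot => hfil.2.1 (hbot ▸ hfb)
      obtain ⟨c, hc, hne⟩ := hcov.2 (f ⊓ b) hfbne inf_le_left
      apply hne
      have h1 : f ⊓ b ⊓ c ≤ c ⊓ b := le_inf inf_le_right (le_trans inf_le_left inf_le_right)
      rw [hb2 c hc] at h1
      exact le_bot_iff.1 h1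
    · rintro ⟨c, hc, hct⟩
      exact charOfSet_true_iff.2 (hfil.2.2.2 c (charOfSet_true_iff.1 hct) f (hcov.1 c hc))

/-- Ultralimit of a family of characters along an ultrafilter on the index type. -/
noncomputable def ulimChar {ι : Type*} (U : Ultrafilter ι) (ξ : ι → G → Bool) : G → Bool :=
  fun f => if {i | ξ i f = true} ∈ U then true else false

lemma ulimChar_true_iff {ι : Type*} {U : Ultrafilter ι} {ξ : ι → G → Bool} {f : G} :
    ulimChar U ξ f = true ↔ {i | ξ i f = true} ∈ U := by
  unfold ulimChar
  split <;> simp_all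

lemma ulimChar_bot {ι : Type*} (U : Ultrafilter ι) (ξ : ι → G → Bool)
    (hξ : ∀ i, IsTightChar (ξ i)) : ulimChar U ξ ⊥ = false := by
  have h1 : {i | ξ i ⊥ = true} = ∅ := by
    ext i
    simp [(hξ i).1.1]
  rw [Bool.eq_false_iff]
  intro ht
  have := ulimChar_true_iff.1 ht
  rw [h1] at this
  exact Filter.empty_notMem _ this

lemma ulimChar_inf {ι : Type*} (U : Ultrafilter ι) (ξ : ι → G → Bool)
    (hξ : ∀ i, IsTightChar (ξ i)) (e f : G) :
    ulimChar U ξ (e ⊓ f) = (ulimChar U ξ e && ulimChar U ξ f) := by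
  have h1 : {i | ξ i (e ⊓ f) = true} = {i | ξ i e = true} ∩ {i | ξ i f = true} := by
    ext i
    simp [(hξ i).1.2.1 e f, Bool.and_eq_true, Set.mem_inter_iff]
  rw [Bool.eq_iff_iff]
  simp only [ulimChar_true_iff, Bool.and_eq_true, h1]
  exact Filter.inter_mem_iff

lemma ulimChar_tight {ι : Type*} (U : Ultrafilter ι) (ξ : ι → G → Bool)
    (hξ : ∀ i, IsTightChar (ξ i)) (f : G) (C : Finset G) (hcov : IsCover C f) :
    (ulimChar U ξ f = true ↔ ∃ c ∈ C, ulimChar U ξ c = true) := by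
  have h1 : {i | ξ i f = true} = ⋃ c ∈ (C : Set G), {i | ξ i c = true} := by
    ext i
    simp only [Set.mem_setOf_eq, Set.mem_iUnion, Finset.mem_coe, exists_prop]
    exact (hξ i).2 f C hcov
  rw [ulimChar_true_iff, h1, Ultrafilter.finite_biUnion_mem_iff C.finite_toSet]
  simp only [Finset.mem_coe]
  constructor
  · rintro ⟨c, hc, hm⟩; exact ⟨c, hc, ulimChar_true_iff.2 hm⟩
  · rintro ⟨c, hc, hm⟩; exact ⟨c, hc, ulimChar_true_iff.1 hm⟩

end Aux

/-- If `h : E → F` is a tight homomorphism of semilattices with zero,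
then the dual map `ĥ ψ = ψ ∘ h` is order-injective with respect to the spectral
(pointwise) orders if and only if `h` is tightly surjective. -/
theorem dualMap_orderInjective_iff_tightlySurjective {E F : Type*} [SemilatticeInf E]
    [OrderBot E] [SemilatticeInf F] [OrderBot F]
    (h : E → F) (h0 : h ⊥ = ⊥) (hinf : ∀ a b : E, h (a ⊓ b) = h a ⊓ h b)
    (ht : IsTightHom h) :
    (∀ ψ₁ ψ₂ : F → Bool, IsTightChar ψ₁ → IsTightChar ψ₂ →
      (∀ e : E, ψ₁ (h e) ≤ ψ₂ (h e)) → ∀ f : F, ψ₁ f ≤ ψ₂ f) ↔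
    TightlySurjective h := by
  classical
  have hmonoh : ∀ {a b : E}, a ≤ b → h a ≤ h b := by
    intro a b hab
    rw [← inf_eq_left.mpr hab, hinf]
    exact inf_le_right
  constructor
  · -- order-injective ⇒ tightly surjective
    intro Hinj f₀
    by_contra hns
    push_neg at hns
    have hf0 : f₀ ≠ ⊥ := by
      intro hbot; subst hbot
      refine hns ∅ (by simp) ⟨by simp, ?_⟩
      intro g hg hle
      exact absurd (le_bot_iff.1 hle) hg
    -- Step 1: for each finite C, a tight character true at f₀ and false at h e for tightly-below e ∈ C
    have step1 : ∀ C : Finset E, ∃ φ : F → Bool, IsTightChar φ ∧ φ f₀ = true ∧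
        ∀ e ∈ C, TightBelow (h e) f₀ → φ (h e) = false := by
      intro C
      set C' := C.filter (fun e => TightBelow (h e) f₀) with hC'def
      have hC' : ∀ e ∈ C', TightBelow (h e) f₀ := fun e he => (Finset.mem_filter.1 he).2
      have hnc := hns C' hC'
      rw [IsCoverFam] at hnc
      push_neg at hnc
      obtain ⟨g, hg, hgle, hgorth⟩ := hnc (fun i _ => inf_le_left)
      obtain ⟨ξ, hfil, hgξ, hmax⟩ := exists_maxFilter hg
      refine ⟨charOfSet ξ, maxFilter_tightChar hfil hmax,
        charOfSet_true_iff.2 (hfil.2.2.2 g hgξ f₀ hgle), ?_⟩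
      intro e heC hte
      have heC' : e ∈ C' := Finset.mem_filter.2 ⟨heC, hte⟩
      have horth : g ⊓ h e = ⊥ := by
        have h1 := hgorth e heC'
        rwa [← inf_assoc, inf_eq_left.2 hgle] at h1
      have hnot : h e ∉ ξ := by
        intro hmem
        exact hfil.2.1 (horth ▸ hfil.2.2.1 g hgξ (h e) hmem)
      simp [charOfSet, hnot]
    choose ξf hξtight hξf₀ hξL using step1
    set U : Ultrafilter (Finset E) := Ultrafilter.of Filter.atTop with hUdef
    have hU : ∀ D : Finset E, {C : Finset E | D ≤ C} ∈ U :=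
      fun D => Ultrafilter.of_le Filter.atTop (Filter.Ici_mem_atTop D)
    set ψ₁ : F → Bool := ulimChar U ξf with hψ₁def
    have hψ₁f₀ : ψ₁ f₀ = true := by
      apply ulimChar_true_iff.2
      exact Filter.univ_mem' (fun C => hξf₀ C)
    have hψ₁tight : IsTightChar ψ₁ :=
      ⟨⟨ulimChar_bot U ξf hξtight, ulimChar_inf U ξf hξtight, ⟨f₀, hψ₁f₀⟩⟩,
        ulimChar_tight U ξf hξtight⟩
    have hL : ∀ e : E, TightBelow (h e) f₀ → ψ₁ (h e) = false := by
      intro e hte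
      have hdis : {C : Finset E | ξf C (h e) = true} ∩ {C : Finset E | {e} ≤ C} = ∅ := by
        ext C
        simp only [Set.mem_inter_iff, Set.mem_setOf_eq, Set.mem_empty_iff_false, iff_false,
          not_and]
        intro h1 h2
        have := hξL C e (h2 (Finset.mem_singleton_self e)) hte
        rw [h1] at this
        exact absurd this (by decide)
      rw [Bool.eq_false_iff]
      intro htr
      have h1 := ulimChar_true_iff.1 htr
      have h2 := Filter.inter_mem h1 (hU {e})
      rw [hdis] at h2
      exact Filter.empty_notMem _ h2
    -- the set A of e with ψ₁(h e) = true
    obtain ⟨C₀, hC₀⟩ := ht.1 f₀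
    have hcov₀ : IsCover (C₀.image (fun e => f₀ ⊓ h e)) f₀ := by
      constructor
      · intro c hc
        obtain ⟨e, -, rfl⟩ := Finset.mem_image.1 hc
        exact inf_le_left
      · intro g hg hle
        obtain ⟨i, hi, hne⟩ := hC₀.2 g hg hle
        exact ⟨_, Finset.mem_image_of_mem _ hi, hne⟩
    obtain ⟨c, hc, hctrue⟩ := (hψ₁tight.2 f₀ _ hcov₀).1 hψ₁f₀
    obtain ⟨e₀, -, rfl⟩ := Finset.mem_image.1 hc
    have he₀ : ψ₁ (h e₀) = true := char_le_of_le hψ₁tight.1.2.1 inf_le_right hctrue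
    set A : Set E := {e | ψ₁ (h e) = true} with hAdef
    have he₀A : e₀ ∈ A := he₀
    have hAmeet : ∀ x ∈ A, ∀ y ∈ A, x ⊓ y ∈ A := by
      intro x hx y hy
      show ψ₁ (h (x ⊓ y)) = true
      rw [hinf, hψ₁tight.1.2.1, hx, hy]
      rfl
    -- Step 2: for each finite D, a tight character false at f₀, true on h(A ∩ D) and at h e₀
    have step2 : ∀ D : Finset E, ∃ φ : F → Bool, IsTightChar φ ∧ φ f₀ = false ∧
        φ (h e₀) = true ∧ ∀ e ∈ D, e ∈ A → φ (h e) = true := by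
      intro D
      set D' := insert e₀ (D.filter (· ∈ A)) with hD'def
      have hD'A : ∀ e ∈ D', e ∈ A := by
        intro e he
        rcases Finset.mem_insert.1 he with rfl | he
        · exact he₀A
        · exact (Finset.mem_filter.1 he).2
      have hne : D'.Nonempty := ⟨e₀, Finset.mem_insert_self _ _⟩
      set estar := D'.inf' hne id with hestar
      have hestarA : estar ∈ A := Finset.inf'_mem A hAmeet D' hne id hD'A
      have hnotL : ¬ TightBelow (h estar) f₀ := by
        intro hl
        have h1 := hL estar hl
        have h2 : ψ₁ (h estar) = true := hestarA
        rw [h1] at h2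
        exact absurd h2 (by decide)
      rw [TightBelow] at hnotL
      obtain ⟨g, hg, hgle, hgorth⟩ := not_not.1 hnotL
      obtain ⟨ξ, hfil, hgξ, hmax⟩ := exists_maxFilter hg
      have hf₀not : f₀ ∉ ξ := by
        intro hmem
        exact hfil.2.1 (hgorth ▸ hfil.2.2.1 g hgξ f₀ hmem)
      refine ⟨charOfSet ξ, maxFilter_tightChar hfil hmax, by simp [charOfSet, hf₀not], ?_, ?_⟩
      · apply charOfSet_true_iff.2
        apply hfil.2.2.2 g hgξ
        exact le_trans hgle (hmonoh (Finset.inf'_le id (Finset.mem_insert_self _ _)))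
      · intro e heD heA
        apply charOfSet_true_iff.2
        apply hfil.2.2.2 g hgξ
        refine le_trans hgle (hmonoh (Finset.inf'_le id ?_))
        exact Finset.mem_insert_of_mem (Finset.mem_filter.2 ⟨heD, heA⟩)
    choose ηf hηtight hηf₀ hηe₀ hηA using step2
    set ψ₂ : F → Bool := ulimChar U ηf with hψ₂def
    have hψ₂e₀ : ψ₂ (h e₀) = true := by
      apply ulimChar_true_iff.2
      exact Filter.univ_mem' (fun D => hηe₀ D)
    have hψ₂tight : IsTightChar ψ₂ :=
      ⟨⟨ulimChar_bot U ηf hηtight, ulimChar_inf U ηf hηtight, ⟨h e₀, hψ₂e₀⟩⟩,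
        ulimChar_tight U ηf hηtight⟩
    have hψ₂f₀ : ψ₂ f₀ = false := by
      rw [Bool.eq_false_iff]
      intro htr
      have h1 := ulimChar_true_iff.1 htr
      have h2 : {D : Finset E | ηf D f₀ = true} = ∅ := by
        ext D
        simp [hηf₀ D]
      rw [h2] at h1
      exact Filter.empty_notMem _ h1
    have hψ₂A : ∀ e : E, ψ₁ (h e) = true → ψ₂ (h e) = true := by
      intro e heA
      apply ulimChar_true_iff.2
      refine Filter.mem_of_superset (hU {e}) ?_
      intro D hD
      exact hηA D e (hD (Finset.mem_singleton_self e)) heA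
    have hle := Hinj ψ₁ ψ₂ hψ₁tight hψ₂tight ?_ f₀
    · rw [hψ₁f₀, hψ₂f₀] at hle
      exact absurd hle (by decide)
    · intro e
      by_cases hc : ψ₁ (h e) = true
      · rw [hc, hψ₂A e hc]
      · rw [Bool.not_eq_true] at hc
        rw [hc]
        exact Bool.false_le _
  · -- tightly surjective ⇒ order-injective
    intro hts ψ₁ ψ₂ h₁ h₂ hmono f
    by_cases hf : ψ₁ f = true
    swap
    · rw [Bool.not_eq_true] at hf
      rw [hf]
      exact Bool.false_le _
    obtain ⟨C, hCtb, hCfam⟩ := hts f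
    have hcov : IsCover (C.image (fun e => f ⊓ h e)) f := by
      constructor
      · intro c hc
        obtain ⟨e, -, rfl⟩ := Finset.mem_image.1 hc
        exact inf_le_left
      · intro g hg hle
        obtain ⟨i, hi, hne⟩ := hCfam.2 g hg hle
        exact ⟨_, Finset.mem_image_of_mem _ hi, hne⟩
    obtain ⟨c, hc, hctrue⟩ := (h₁.2 f _ hcov).1 hf
    obtain ⟨e, heC, rfl⟩ := Finset.mem_image.1 hc
    have h1e : ψ₁ (h e) = true := char_le_of_le h₁.1.2.1 inf_le_right hctrue
    have h2e : ψ₂ (h e) = true := by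
      have h3 := hmono e
      rw [h1e] at h3
      rcases Bool.eq_false_or_eq_true (ψ₂ (h e)) with h' | h'
      · exact h'
      · rw [h'] at h3
        exact absurd h3 (by decide)
    have hc2 : IsCover ({h e ⊓ f} : Finset F) (h e) := by
      constructor
      · intro c hcm
        rw [Finset.mem_singleton] at hcm
        subst hcm
        exact inf_le_left
      · intro g hg hgle
        refine ⟨h e ⊓ f, Finset.mem_singleton_self _, ?_⟩
        intro hbot
        apply hCtb e heC
        have heq : g ⊓ (h e ⊓ f) = g ⊓ f := by
          rw [← inf_assoc, inf_eq_left.2 hgle]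
        exact ⟨g, hg, hgle, heq ▸ hbot⟩
    obtain ⟨c, hcm, hct⟩ := (h₂.2 (h e) _ hc2).1 h2e
    rw [Finset.mem_singleton] at hcm
    subst hcm
    have h2f : ψ₂ f = true := char_le_of_le h₂.1.2.1 inf_le_right hct
    rw [hf, h2f]
end

section
/- Let h : E → F be a homomorphism of semilattices with zero which is both tightly injective and tightly surjective. Then h is tight, i.e. (a) for every f ∈ F there exists a finite set C ⊆ E such that {f ∧ h(e) : e ∈ C} is a cover for f, and (b) whenever {e₁,…,e_n} is a cover for e ∈ E, the set {h(e₁),…,h(e_n)} is a cover for h(e). -/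
/-- A homomorphism of semilattices with zero which is both tightly
injective and tightly surjective is tight: (a) for every `f ∈ F` there is a finite
`C ⊆ E` with `{f ⊓ h e : e ∈ C}` a cover for `f`, and (b) `h` maps covers to covers. -/
theorem tight_of_consonance {E F : Type*} [SemilatticeInf E] [OrderBot E]
    [SemilatticeInf F] [OrderBot F]
    (h : E → F) (h0 : h ⊥ = ⊥) (hinf : ∀ a b : E, h (a ⊓ b) = h a ⊓ h b)
    (hi : TightlyInjective h) (hs : TightlySurjective h) :
    (∀ f : F, ∃ C : Finset E, IsCoverFam C (fun e => f ⊓ h e) f) ∧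
    (∀ e : E, ∀ C : Finset E, IsCover C e → IsCoverFam C h (h e)) := by
  constructor
  · intro f
    obtain ⟨C, _, hC⟩ := hs f
    exact ⟨C, hC⟩
  · intro e C hC
    constructor
    · intro c hc
      calc h c = h (c ⊓ e) := by rw [inf_eq_left.mpr (hC.1 c hc)]
        _ = h c ⊓ h e := hinf _ _
        _ ≤ h e := inf_le_right
    · intro g hg hgle
      by_contra hcon
      push_neg at hcon
      obtain ⟨D, hDtb, _, hDcov⟩ := hs g
      obtain ⟨d, hdD, hd⟩ := hDcov g hg le_rfl
      have hdg : g ⊓ h d ≠ ⊥ := by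
        intro h'
        exact hd (by simpa [inf_assoc] using congrArg (g ⊓ ·) h')
      have key : ∀ c ∈ C, d ⊓ c = ⊥ := by
        intro c hc
        have hbot : h (d ⊓ c) = ⊥ := by
          rw [hinf]
          by_contra hne
          apply hDtb d hdD
          refine ⟨h d ⊓ h c, hne, inf_le_left, le_bot_iff.mp ?_⟩
          calc h d ⊓ h c ⊓ g ≤ g ⊓ h c :=
                le_inf inf_le_right (le_trans inf_le_left inf_le_right)
            _ = ⊥ := hcon c hc
        have heq : TightEquiv (h (d ⊓ c)) (h ⊥) := by
          rw [hbot, h0]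
          exact ⟨fun ⟨x, hx, hxle, _⟩ => hx (le_bot_iff.mp hxle),
                 fun ⟨x, hx, hxle, _⟩ => hx (le_bot_iff.mp hxle)⟩
        have htl := (hi _ _ heq).1
        by_contra hne
        exact htl ⟨d ⊓ c, hne, le_rfl, inf_bot_eq _⟩
      have hde : d ⊓ e ≠ ⊥ := by
        intro h'
        apply hdg
        have h1 : g ⊓ h d ≤ h (d ⊓ e) := by
          rw [hinf]
          exact le_inf inf_le_right (le_trans inf_le_left hgle)
        rw [h', h0] at h1
        exact le_bot_iff.mp h1
      obtain ⟨c, hc, hcne⟩ := hC.2 (d ⊓ e) hde inf_le_right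
      apply hcne
      have hle : d ⊓ e ⊓ c ≤ d ⊓ c := inf_le_inf_right c inf_le_left
      rw [key c hc] at hle
      exact le_bot_iff.mp hle
end
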